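/- Let n ≥ 2 and p ∈ [1, ∞), p ≠ 2. Set ω = exp(2πi/n). If x ∈ ℂⁿ is an invertible element whose norm and whose inverse's norm in F^p(ℤ_n) both equal 1 (where ‖ξ‖_{F^p(ℤ_n)} = ‖u·d(ξ)·u⁻¹‖_{B(ℓᵖ(Fin n))} with u the Fourier matrix), then there exist ζ ∈ S¹ and k ∈ {0, …, n−1} with x = (ζ, ζω^k, ζω^{2k}, …, ζω^{(n−1)k}). In particular, for n ≥ 2 not every element of (S¹)ⁿ has F^p-norm one. -/

import Mathlib

open Real
open scoped BigOperators

/-- The `ℓᵖ` norm on `ι → ℂ` for a real exponent `p`. -/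
noncomputable def pNorm {ι : Type*} [Fintype ι] (p : ℝ) (ξ : ι → ℂ) : ℝ :=
  (∑ i, ‖ξ i‖ ^ p) ^ (1 / p)

/-- The operator norm of a matrix acting on `ℓᵖ(ι)`. -/
noncomputable def opNormLp {ι : Type*} [Fintype ι] (p : ℝ) (M : Matrix ι ι ℂ) : ℝ :=
  sInf {c : ℝ | 0 ≤ c ∧ ∀ ξ : ι → ℂ, pNorm p (M.mulVec ξ) ≤ c * pNorm p ξ}

/-- The primitive `n`-th root of unity `ω = exp(2πi/n)`. -/
noncomputable def dftOmega (n : ℕ) : ℂ := Complex.exp (2 * π * Complex.I / n)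

/-- The `n × n` Fourier matrix, with entries `u_{jk} = ω^{jk} / √n`. -/
noncomputable def dftMatrix (n : ℕ) [NeZero n] : Matrix (ZMod n) (ZMod n) ℂ :=
  Matrix.of fun j k => dftOmega n ^ (j.val * k.val) / (Real.sqrt n : ℂ)

/-- The norm `‖ξ‖_{F^p(ℤ_n)} = ‖u·d(ξ)·u⁻¹‖_{B(ℓᵖ)}` on `ℂⁿ`. -/
noncomputable def FpNorm (n : ℕ) [NeZero n] (p : ℝ) (ξ : ZMod n → ℂ) : ℝ :=
  opNormLp p (dftMatrix n * Matrix.diagonal ξ * (dftMatrix n)⁻¹)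

/-! The conjugate `C = u · diag x · u⁻¹` is the circulant matrix of the inverse Fourier
transform of `x`. If `C` and `C⁻¹` both have `ℓᵖ` operator norm at most one, `C` is an
isometry of `ℓᵖ`. For `p < 2` Clarkson's inequality
`‖a + b‖ᵖ + ‖a - b‖ᵖ ≤ 2 (‖a‖ᵖ + ‖b‖ᵖ)` (reversed for `p > 2`) is strict unless `a = 0` or
`b = 0`, so testing the isometry on `e_k ± e_l` shows that distinct columns of `C` have
disjoint supports. A circulant matrix with this property is `ζ` times a cyclic shift with
`|ζ| = 1`, and `u` diagonalises that shift as `diag (ζ ω^{kj})`. -/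

open Matrix WithLp
open ZMod (stdAddChar)

section LpNorm

variable {ι : Type*} [Fintype ι] {p : ℝ}

lemma pNorm_eq_norm_toLp (hp : 0 < p) (ξ : ι → ℂ) :
    pNorm p ξ = ‖toLp (ENNReal.ofReal p) ξ‖ := by
  rw [PiLp.norm_eq_sum (by rwa [ENNReal.toReal_ofReal hp.le]), ENNReal.toReal_ofReal hp.le]
  rfl

lemma pNorm_nonneg (p : ℝ) (ξ : ι → ℂ) : 0 ≤ pNorm p ξ :=
  Real.rpow_nonneg (Finset.sum_nonneg fun i _ => by positivity) _

lemma pNorm_rpow (hp : 0 < p) (ξ : ι → ℂ) : pNorm p ξ ^ p = ∑ i, ‖ξ i‖ ^ p := by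
  rw [pNorm, ← Real.rpow_mul (Finset.sum_nonneg fun i _ => by positivity),
    one_div_mul_cancel hp.ne', Real.rpow_one]

variable [DecidableEq ι]

lemma pNorm_mulVec_le (hp : 1 ≤ p) (M : Matrix ι ι ℂ) (ξ : ι → ℂ) :
    pNorm p (M *ᵥ ξ) ≤ opNormLp p M * pNorm p ξ := by
  have hp0 : 0 < p := by linarith
  have : Fact (1 ≤ ENNReal.ofReal p) := ⟨by simpa using hp⟩
  set L := LinearMap.toContinuousLinearMap (toLpLin (ENNReal.ofReal p) (ENNReal.ofReal p) M)
  have hL : opNormLp p M = ‖L‖ := by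
    rw [opNormLp, ContinuousLinearMap.norm_def]
    congr! 3 with c
    simp only [pNorm_eq_norm_toLp hp0]
    exact and_congr_right fun _ => ⟨fun h v => h (ofLp v), fun h ξ => h (toLp _ ξ)⟩
  rw [hL, pNorm_eq_norm_toLp hp0, pNorm_eq_norm_toLp hp0]
  exact L.le_opNorm (toLp _ ξ)

lemma pNorm_mulVec_eq_of_opNormLp_le_one (hp : 1 ≤ p) {M N : Matrix ι ι ℂ}
    (hM : opNormLp p M ≤ 1) (hN : opNormLp p N ≤ 1) (hNM : N * M = 1) (ξ : ι → ℂ) :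
    pNorm p (M *ᵥ ξ) = pNorm p ξ := by
  refine le_antisymm ?_ ?_
  · calc pNorm p (M *ᵥ ξ) ≤ opNormLp p M * pNorm p ξ := pNorm_mulVec_le hp M ξ
      _ ≤ pNorm p ξ := mul_le_of_le_one_left (pNorm_nonneg p ξ) hM
  · calc pNorm p ξ = pNorm p (N *ᵥ (M *ᵥ ξ)) := by rw [mulVec_mulVec, hNM, one_mulVec]
      _ ≤ opNormLp p N * pNorm p (M *ᵥ ξ) := pNorm_mulVec_le hp N _
      _ ≤ pNorm p (M *ᵥ ξ) := mul_le_of_le_one_left (pNorm_nonneg p _) hN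

end LpNorm

lemma Real.rpow_add_lt_add_rpow {a b q : ℝ} (ha : 0 < a) (hb : 0 < b) (hq : q < 1) :
    (a + b) ^ q < a ^ q + b ^ q := by
  have key {x y : ℝ} (hx : 0 < x) (hy : 0 < y) : x * (x + y) ^ (q - 1) < x ^ q :=
    calc x * (x + y) ^ (q - 1) < x * x ^ (q - 1) :=
          mul_lt_mul_of_pos_left (rpow_lt_rpow_of_neg hx (lt_add_of_pos_right x hy)
            (by linarith)) hx
      _ = x ^ q := by rw [rpow_sub_one hx.ne']; field_simp
  calc (a + b) ^ q = a * (a + b) ^ (q - 1) + b * (b + a) ^ (q - 1) := by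
        rw [add_comm b a, ← add_mul, rpow_sub_one (by positivity)]; field_simp
    _ < a ^ q + b ^ q := add_lt_add (key ha hb) (key hb ha)

lemma Real.add_rpow_lt_rpow_add {a b q : ℝ} (ha : 0 < a) (hb : 0 < b) (hq : 1 < q) :
    a ^ q + b ^ q < (a + b) ^ q := by
  have key {x y : ℝ} (hx : 0 < x) (hy : 0 < y) : x ^ q < x * (x + y) ^ (q - 1) :=
    calc x ^ q = x * x ^ (q - 1) := by rw [rpow_sub_one hx.ne']; field_simp
      _ < x * (x + y) ^ (q - 1) :=
          mul_lt_mul_of_pos_left (rpow_lt_rpow hx.le (lt_add_of_pos_right x hy)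
            (by linarith)) hx
  calc a ^ q + b ^ q < a * (a + b) ^ (q - 1) + b * (b + a) ^ (q - 1) :=
        add_lt_add (key ha hb) (key hb ha)
    _ = (a + b) ^ q := by
        rw [add_comm b a, ← add_mul, rpow_sub_one (by positivity)]; field_simp

lemma Real.rpow_eq_sq_rpow_half {x : ℝ} (hx : 0 ≤ x) (p : ℝ) : x ^ p = (x ^ 2) ^ (p / 2) := by
  rw [← rpow_natCast_mul hx, Nat.cast_ofNat, mul_div_cancel₀ p two_ne_zero]

section Clarkson

variable {E : Type*} [NormedAddCommGroup E] [InnerProductSpace ℝ E] {p : ℝ}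

lemma norm_add_sq_add_norm_sub_sq (a b : E) :
    ‖a + b‖ ^ 2 + ‖a - b‖ ^ 2 = 2 * (‖a‖ ^ 2 + ‖b‖ ^ 2) := by
  rw [norm_add_sq_real, norm_sub_sq_real]
  ring

lemma norm_add_rpow_add_norm_sub_rpow_le_of_le_two (hp0 : 0 ≤ p) (hp2 : p ≤ 2) (a b : E) :
    ‖a + b‖ ^ p + ‖a - b‖ ^ p ≤ 2 * (‖a‖ ^ 2 + ‖b‖ ^ 2) ^ (p / 2) := by
  have hmid := (Real.concaveOn_rpow (p := p / 2) (by linarith) (by linarith)).2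
    (Set.mem_Ici.2 (sq_nonneg ‖a + b‖)) (Set.mem_Ici.2 (sq_nonneg ‖a - b‖))
    (by norm_num : (0 : ℝ) ≤ 1 / 2) (by norm_num : (0 : ℝ) ≤ 1 / 2) (by norm_num)
  simp only [smul_eq_mul, ← mul_add, norm_add_sq_add_norm_sub_sq] at hmid
  rw [← mul_assoc, one_div_mul_cancel two_ne_zero, one_mul] at hmid
  rw [Real.rpow_eq_sq_rpow_half (norm_nonneg (a + b)),
    Real.rpow_eq_sq_rpow_half (norm_nonneg (a - b))]
  linarith

lemma le_norm_add_rpow_add_norm_sub_rpow_of_two_le (hp2 : 2 ≤ p) (a b : E) :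
    2 * (‖a‖ ^ 2 + ‖b‖ ^ 2) ^ (p / 2) ≤ ‖a + b‖ ^ p + ‖a - b‖ ^ p := by
  have hmid := (convexOn_rpow (p := p / 2) (by linarith)).2
    (Set.mem_Ici.2 (sq_nonneg ‖a + b‖)) (Set.mem_Ici.2 (sq_nonneg ‖a - b‖))
    (by norm_num : (0 : ℝ) ≤ 1 / 2) (by norm_num : (0 : ℝ) ≤ 1 / 2) (by norm_num)
  simp only [smul_eq_mul, ← mul_add, norm_add_sq_add_norm_sub_sq] at hmid
  rw [← mul_assoc, one_div_mul_cancel two_ne_zero, one_mul] at hmid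
  rw [Real.rpow_eq_sq_rpow_half (norm_nonneg (a + b)),
    Real.rpow_eq_sq_rpow_half (norm_nonneg (a - b))]
  linarith

lemma norm_add_rpow_add_norm_sub_rpow_le (hp0 : 0 ≤ p) (hp2 : p ≤ 2) (a b : E) :
    ‖a + b‖ ^ p + ‖a - b‖ ^ p ≤ 2 * (‖a‖ ^ p + ‖b‖ ^ p) := by
  refine (norm_add_rpow_add_norm_sub_rpow_le_of_le_two hp0 hp2 a b).trans ?_
  rw [Real.rpow_eq_sq_rpow_half (norm_nonneg a), Real.rpow_eq_sq_rpow_half (norm_nonneg b)]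
  gcongr
  exact Real.rpow_add_le_add_rpow (by positivity) (by positivity) (by linarith) (by linarith)

lemma norm_add_rpow_add_norm_sub_rpow_lt (hp0 : 0 ≤ p) (hp2 : p < 2) {a b : E} (ha : a ≠ 0)
    (hb : b ≠ 0) : ‖a + b‖ ^ p + ‖a - b‖ ^ p < 2 * (‖a‖ ^ p + ‖b‖ ^ p) := by
  refine (norm_add_rpow_add_norm_sub_rpow_le_of_le_two hp0 hp2.le a b).trans_lt ?_
  rw [Real.rpow_eq_sq_rpow_half (norm_nonneg a), Real.rpow_eq_sq_rpow_half (norm_nonneg b)]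
  gcongr
  exact Real.rpow_add_lt_add_rpow (by positivity) (by positivity) (by linarith)

lemma le_norm_add_rpow_add_norm_sub_rpow (hp2 : 2 ≤ p) (a b : E) :
    2 * (‖a‖ ^ p + ‖b‖ ^ p) ≤ ‖a + b‖ ^ p + ‖a - b‖ ^ p := by
  refine le_trans ?_ (le_norm_add_rpow_add_norm_sub_rpow_of_two_le hp2 a b)
  rw [Real.rpow_eq_sq_rpow_half (norm_nonneg a), Real.rpow_eq_sq_rpow_half (norm_nonneg b)]
  gcongr
  exact Real.add_rpow_le_rpow_add (by positivity) (by positivity) (by linarith)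

lemma lt_norm_add_rpow_add_norm_sub_rpow (hp2 : 2 < p) {a b : E} (ha : a ≠ 0) (hb : b ≠ 0) :
    2 * (‖a‖ ^ p + ‖b‖ ^ p) < ‖a + b‖ ^ p + ‖a - b‖ ^ p := by
  refine lt_of_lt_of_le ?_ (le_norm_add_rpow_add_norm_sub_rpow_of_two_le hp2.le a b)
  rw [Real.rpow_eq_sq_rpow_half (norm_nonneg a), Real.rpow_eq_sq_rpow_half (norm_nonneg b)]
  gcongr
  exact Real.add_rpow_lt_rpow_add (by positivity) (by positivity) (by linarith)

lemma sum_norm_add_rpow_add_norm_sub_rpow_ne {ι : Type*} [Fintype ι] (hp0 : 0 ≤ p)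
    (hp2 : p ≠ 2) {f g : ι → E} {m : ι} (hf : f m ≠ 0) (hg : g m ≠ 0) :
    ∑ i, (‖f i + g i‖ ^ p + ‖f i - g i‖ ^ p) ≠
      2 * ∑ i, (‖f i‖ ^ p + ‖g i‖ ^ p) := by
  rw [Finset.mul_sum]
  rcases hp2.lt_or_gt with hp2 | hp2
  · exact (Finset.sum_lt_sum (fun i _ => norm_add_rpow_add_norm_sub_rpow_le hp0 hp2.le _ _)
      ⟨m, Finset.mem_univ m, norm_add_rpow_add_norm_sub_rpow_lt hp0 hp2 hf hg⟩).ne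
  · exact (Finset.sum_lt_sum (fun i _ => le_norm_add_rpow_add_norm_sub_rpow hp2.le _ _)
      ⟨m, Finset.mem_univ m, lt_norm_add_rpow_add_norm_sub_rpow hp2 hf hg⟩).ne'

end Clarkson

section Isometry

variable {ι : Type*} [Fintype ι] [DecidableEq ι] {p : ℝ} {M : Matrix ι ι ℂ}

lemma sum_norm_rpow_single_add_single (hp : 0 < p) {k l : ι} (hkl : k ≠ l) (a b : ℂ) :
    ∑ m, ‖(Pi.single k a + Pi.single l b : ι → ℂ) m‖ ^ p =
      ‖a‖ ^ p + ‖b‖ ^ p := by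
  rw [Fintype.sum_eq_add k l hkl fun m hm => by simp [hm.1, hm.2, hp.ne']]
  simp [hkl, hkl.symm]

omit [DecidableEq ι] in
lemma sum_norm_rpow_mulVec_eq (hp : 0 < p) (hM : ∀ ξ, pNorm p (M *ᵥ ξ) = pNorm p ξ)
    (ξ : ι → ℂ) : ∑ m, ‖(M *ᵥ ξ) m‖ ^ p = ∑ m, ‖ξ m‖ ^ p := by
  rw [← pNorm_rpow hp, ← pNorm_rpow hp, hM]

lemma sum_norm_rpow_col_eq_one (hp : 0 < p) (hM : ∀ ξ, pNorm p (M *ᵥ ξ) = pNorm p ξ)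
    (k : ι) : ∑ m, ‖M m k‖ ^ p = 1 := by
  calc ∑ m, ‖M m k‖ ^ p = ∑ m, ‖(M *ᵥ Pi.single k 1) m‖ ^ p := by simp
    _ = ∑ m, ‖(Pi.single k 1 : ι → ℂ) m‖ ^ p := sum_norm_rpow_mulVec_eq hp hM _
    _ = 1 := by rw [Fintype.sum_eq_single k fun m hm => by simp [hm, hp.ne']]; simp

lemma sum_norm_rpow_mulVec_single_add_single (hp : 0 < p)
    (hM : ∀ ξ, pNorm p (M *ᵥ ξ) = pNorm p ξ) {k l : ι} (hkl : k ≠ l) (a b : ℂ) :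
    ∑ m, ‖M m k * a + M m l * b‖ ^ p = ‖a‖ ^ p + ‖b‖ ^ p := by
  calc ∑ m, ‖M m k * a + M m l * b‖ ^ p
        = ∑ m, ‖(M *ᵥ (Pi.single k a + Pi.single l b)) m‖ ^ p := by
          simp [mulVec_add, mul_comm]
    _ = ‖a‖ ^ p + ‖b‖ ^ p := by
        rw [sum_norm_rpow_mulVec_eq hp hM, sum_norm_rpow_single_add_single hp hkl]

lemma eq_zero_or_eq_zero_of_pNorm_mulVec_eq (hp : 0 < p) (hp2 : p ≠ 2)
    (hM : ∀ ξ, pNorm p (M *ᵥ ξ) = pNorm p ξ) {k l : ι} (hkl : k ≠ l) (m : ι) :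
    M m k = 0 ∨ M m l = 0 := by
  by_contra! h
  have hadd := sum_norm_rpow_mulVec_single_add_single hp hM hkl 1 1
  have hsub := sum_norm_rpow_mulVec_single_add_single hp hM hkl 1 (-1)
  simp only [mul_one, mul_neg, ← sub_eq_add_neg, norm_one, norm_neg, Real.one_rpow] at hadd hsub
  refine sum_norm_add_rpow_add_norm_sub_rpow_ne hp.le hp2 (f := fun m => M m k)
    (g := fun m => M m l) h.1 h.2 ?_
  rw [Finset.sum_add_distrib, Finset.sum_add_distrib, hadd, hsub,
    sum_norm_rpow_col_eq_one hp hM, sum_norm_rpow_col_eq_one hp hM]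
  norm_num

end Isometry

section Circulant

variable {G : Type*} [AddGroup G] [Fintype G] [DecidableEq G] {p : ℝ}

lemma exists_eq_single_of_pNorm_circulant_mulVec_eq (hp : 0 < p) (hp2 : p ≠ 2) {c : G → ℂ}
    (hc : ∀ ξ, pNorm p (circulant c *ᵥ ξ) = pNorm p ξ) :
    ∃ r ζ, ‖ζ‖ = 1 ∧ c = Pi.single r ζ := by
  have hcol : ∑ m, ‖c m‖ ^ p = 1 := by
    simpa [circulant_apply] using sum_norm_rpow_col_eq_one hp hc 0
  obtain ⟨r, hr⟩ : ∃ r, c r ≠ 0 := by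
    by_contra! h
    simp [h, hp.ne'] at hcol
  have hc_eq : c = Pi.single r (c r) := by
    ext t
    rcases eq_or_ne t r with rfl | ht
    · simp
    -- columns `0` and `-t + r` of `circulant c` meet in row `r`, at the entries `c r` and `c t`
    have h := eq_zero_or_eq_zero_of_pNorm_mulVec_eq hp hp2 hc (k := 0) (l := -t + r)
      (by rwa [ne_comm, Ne, neg_add_eq_zero]) r
    simpa [circulant_apply, hr, ht, sub_eq_add_neg] using h
  refine ⟨r, c r, ?_, hc_eq⟩
  rw [hc_eq, Fintype.sum_eq_single r fun m hm => by simp [hm, hp.ne'], Pi.single_eq_same] at hcol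
  exact (Real.rpow_left_inj (norm_nonneg _) zero_le_one hp.ne').1 (by rwa [Real.one_rpow])

end Circulant

section Fourier

variable {n : ℕ} [NeZero n]

lemma dftOmega_pow_eq_stdAddChar (k : ℕ) (j : ZMod n) :
    dftOmega n ^ (k * j.val) = stdAddChar ((k : ZMod n) * j) := by
  have hkj : (k : ZMod n) * j = ((k * j.val : ℕ) : ZMod n) := by simp
  rw [hkj, ZMod.stdAddChar_apply, ZMod.toCircle_natCast, dftOmega, ← Complex.exp_nat_mul]
  congr 1
  push_cast
  ring

lemma dftMatrix_apply (j k : ZMod n) : dftMatrix n j k = stdAddChar (j * k) / √n := by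
  rw [dftMatrix, of_apply, dftOmega_pow_eq_stdAddChar, ZMod.natCast_zmod_val]

omit [NeZero n] in
lemma ofReal_sqrt_natCast_mul_self : ((√n : ℝ) : ℂ) * √n = n := by
  rw [← Complex.ofReal_mul, Real.mul_self_sqrt n.cast_nonneg, Complex.ofReal_natCast]

lemma dftMatrix_mul_of_stdAddChar_neg :
    dftMatrix n * of (fun j k => stdAddChar (-(j * k)) / √n) = 1 := by
  ext a b
  have hterm (j : ZMod n) : dftMatrix n a j * stdAddChar (-(j * b)) / √n
      = stdAddChar (j * (a - b)) / n := by
    rw [dftMatrix_apply, div_mul_eq_mul_div, div_div, ofReal_sqrt_natCast_mul_self,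
      ← AddChar.map_add_eq_mul]
    ring_nf
  simp only [mul_apply, of_apply, ← mul_div_assoc, hterm, ← Finset.sum_div,
    AddChar.sum_mulShift _ (ZMod.isPrimitive_stdAddChar n), sub_eq_zero, ZMod.card, one_apply]
  split_ifs <;> simp [NeZero.ne n]

lemma inv_dftMatrix : (dftMatrix n)⁻¹ = of (fun j k => stdAddChar (-(j * k)) / √n) :=
  inv_eq_right_inv dftMatrix_mul_of_stdAddChar_neg

lemma isUnit_det_dftMatrix : IsUnit (dftMatrix n).det :=
  isUnit_det_of_right_inverse dftMatrix_mul_of_stdAddChar_neg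

lemma dftMatrix_mul_diagonal_mul_inv (x : ZMod n → ℂ) :
    dftMatrix n * diagonal x * (dftMatrix n)⁻¹
      = circulant (fun r => (∑ j, x j * stdAddChar (j * r)) / n) := by
  ext m k
  rw [mul_apply, circulant_apply, Finset.sum_div]
  refine Finset.sum_congr rfl fun j _ => ?_
  rw [mul_diagonal, inv_dftMatrix, of_apply, dftMatrix_apply, ← ofReal_sqrt_natCast_mul_self,
    show j * (m - k) = m * j + -(j * k) by ring, AddChar.map_add_eq_mul]
  ring

lemma eq_mul_stdAddChar_of_dftMatrix_mul_diagonal_mul_inv_eq {x : ZMod n → ℂ} {r : ZMod n}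
    {ζ : ℂ} (h : dftMatrix n * diagonal x * (dftMatrix n)⁻¹ = circulant (Pi.single r ζ))
    (k : ZMod n) : x k = ζ * stdAddChar (-r * k) := by
  have hCu : circulant (Pi.single r ζ) * dftMatrix n = dftMatrix n * diagonal x := by
    rw [← h, Matrix.mul_assoc, nonsing_inv_mul _ isUnit_det_dftMatrix, Matrix.mul_one]
  have hrk := congrFun₂ hCu r k
  rw [mul_apply, Fintype.sum_eq_single 0 fun m hm => by simp [circulant_apply, hm], mul_diagonal,
    circulant_apply, sub_zero, Pi.single_eq_same, dftMatrix_apply, dftMatrix_apply, zero_mul,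
    AddChar.map_zero_eq_one, mul_div_assoc', div_mul_eq_mul_div,
    div_left_inj' (by simp [NeZero.ne n])] at hrk
  have hunit : stdAddChar (r * k) * stdAddChar (-r * k) = 1 := by
    rw [← AddChar.map_add_eq_mul, neg_mul, add_neg_cancel, AddChar.map_zero_eq_one]
  linear_combination (-stdAddChar (-r * k)) * hrk - x k * hunit

end Fourier

lemma AddChar.mul_eq_sq_of_forall_eq_mul {R M : Type*} [Ring R] [CommMonoid M] {ψ : AddChar R M}
    {x : R → M} {ζ : M} {r : R} (hx : ∀ j, x j = ζ * ψ (r * j)) : x 0 * x 2 = x 1 ^ 2 := by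
  rw [hx, hx, hx, mul_zero, mul_two, mul_one, map_add_eq_mul, map_zero_eq_one, mul_one, sq,
    mul_mul_mul_comm, mul_assoc]

theorem exists_eq_mul_stdAddChar_of_FpNorm_le_one {n : ℕ} [NeZero n] {p : ℝ} (hp : 1 ≤ p)
    (hp2 : p ≠ 2) {x : ZMod n → ℂ} (hx : ∀ j, x j ≠ 0) (hxn : FpNorm n p x ≤ 1)
    (hxi : FpNorm n p (fun j => (x j)⁻¹) ≤ 1) :
    ∃ ζ : ℂ, ∃ r : ZMod n, ‖ζ‖ = 1 ∧ ∀ j, x j = ζ * stdAddChar (r * j) := by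
  have hinv : (dftMatrix n * diagonal (fun j => (x j)⁻¹) * (dftMatrix n)⁻¹) *
      (dftMatrix n * diagonal x * (dftMatrix n)⁻¹) = 1 := by
    simp only [Matrix.mul_assoc, nonsing_inv_mul_cancel_left _ _ isUnit_det_dftMatrix,
      ← Matrix.mul_assoc (diagonal _), diagonal_mul_diagonal, inv_mul_cancel₀ (hx _)]
    simp [mul_nonsing_inv _ isUnit_det_dftMatrix]
  have hiso := pNorm_mulVec_eq_of_opNormLp_le_one hp hxn hxi hinv
  rw [dftMatrix_mul_diagonal_mul_inv] at hiso
  obtain ⟨r, ζ, hζ, hc⟩ :=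
    exists_eq_single_of_pNorm_circulant_mulVec_eq (by linarith) hp2 hiso
  refine ⟨ζ, -r, hζ, eq_mul_stdAddChar_of_dftMatrix_mul_diagonal_mul_inv_eq ?_⟩
  rw [dftMatrix_mul_diagonal_mul_inv, hc]

/-- For `n ≥ 2` and `p ≠ 2`: if `x ∈ ℂⁿ` is invertible with `‖x‖_{F^p(ℤ_n)} = 1`
and `‖x⁻¹‖_{F^p(ℤ_n)} = 1`, then `x = (ζ, ζω^k, …, ζω^{(n−1)k})` for some
`ζ ∈ S¹` and `0 ≤ k < n`. In particular not every element of `(S¹)ⁿ` has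
`F^p`-norm one. -/
theorem stmt19 (n : ℕ) [NeZero n] (hn : 2 ≤ n) (p : ℝ) (hp : 1 ≤ p) (hp2 : p ≠ 2)
    (x : ZMod n → ℂ) (hx : ∀ j, x j ≠ 0)
    (hxn : FpNorm n p x = 1)
    (hxi : FpNorm n p (fun j => (x j)⁻¹) = 1) :
    (∃ (ζ : ℂ) (k : ℕ), ‖ζ‖ = 1 ∧ k < n ∧
        ∀ j : ZMod n, x j = ζ * dftOmega n ^ (k * j.val)) ∧
    ∃ y : ZMod n → ℂ, (∀ j, ‖y j‖ = 1) ∧ FpNorm n p y ≠ 1 := by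
  have : Fact (1 < n) := ⟨hn⟩
  obtain ⟨ζ, r, hζ, hx_eq⟩ :=
    exists_eq_mul_stdAddChar_of_FpNorm_le_one hp hp2 hx hxn.le hxi.le
  refine ⟨⟨ζ, r.val, hζ, r.val_lt, fun j => ?_⟩, ?_⟩
  · rw [hx_eq, dftOmega_pow_eq_stdAddChar, ZMod.natCast_zmod_val]
  by_contra! hall
  -- `(1, i, 1, …, 1)` violates the relation `y 0 * y 2 = y 1 ^ 2` of `ζ * stdAddChar (r * ·)`
  set y : ZMod n → ℂ := fun j => if j = 1 then Complex.I else 1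
  have hy (j : ZMod n) : ‖y j‖ = 1 := by by_cases h : j = 1 <;> simp [y, h]
  obtain ⟨ζ', r', -, hy_eq⟩ := exists_eq_mul_stdAddChar_of_FpNorm_le_one hp hp2
    (fun j => norm_ne_zero_iff.1 (by simp [hy])) (hall y hy).le (hall _ fun j => by simp [hy]).le
  have h21 : (2 : ZMod n) ≠ 1 := by
    rw [← one_add_one_eq_two, Ne, add_eq_right]
    exact one_ne_zero
  have h := AddChar.mul_eq_sq_of_forall_eq_mul hy_eq
  norm_num [y, h21] at h
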